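/- For every natural number k ≥ 2, the Farey distance from F(k+1)/F(k) to ∞ exceeds the Farey distance from F(k−1)/F(k−2) to ∞ by exactly one: d_𝔉(F(k+1)/F(k), ∞) = d_𝔉(F(k−1)/F(k−2), ∞) + 1. -/

import Mathlib

open OnePoint

/-- Numerator of a Farey vertex: `∞` is represented as `1/0`, and a rational
`p` is represented in lowest terms as `p.num / p.den`. -/
def vNum (x : OnePoint ℚ) : ℤ := OnePoint.rec 1 Rat.num x

/-- Denominator of a Farey vertex. -/
def vDen (x : OnePoint ℚ) : ℤ := OnePoint.rec 0 (fun p => (p.den : ℤ)) x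

/-- The Farey graph: vertices are `ℚ ∪ {∞}`, and two distinct vertices with
lowest-terms representations `a/b` and `c/d` are adjacent iff `|a·d − b·c| = 1`. -/
def fareyGraph : SimpleGraph (OnePoint ℚ) where
  Adj x y := x ≠ y ∧ |vNum x * vDen y - vDen x * vNum y| = 1
  symm := by
    constructor
    rintro x y ⟨hxy, h⟩
    refine ⟨hxy.symm, ?_⟩
    rw [show vNum y * vDen x - vDen y * vNum x
        = -(vNum x * vDen y - vDen x * vNum y) by ring, abs_neg]
    exact h
  loopless := by
    constructor
    rintro x ⟨hxx, -⟩
    exact hxx rfl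

/-- The shifted Fibonacci sequence `F k = Nat.fib (k+1)`. -/
def F : ℕ → ℕ
  | 0 => 1
  | 1 => 1
  | k + 2 => F (k + 1) + F k

/-- The Farey vertex `F (k+1) / F k`. -/
def fibVertex (k : ℕ) : OnePoint ℚ := (((F (k + 1) : ℚ) / (F k : ℚ) : ℚ) : OnePoint ℚ)

/-! ### Basic facts about `vNum`, `vDen` -/

lemma vNum_infty : vNum ∞ = 1 := rfl
lemma vDen_infty : vDen ∞ = 0 := rfl
lemma vNum_coe (q : ℚ) : vNum (q : OnePoint ℚ) = q.num := rfl
lemma vDen_coe (q : ℚ) : vDen (q : OnePoint ℚ) = (q.den : ℤ) := rfl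

lemma vDen_nonneg (x : OnePoint ℚ) : 0 ≤ vDen x := by
  induction x using OnePoint.rec with
  | infty => simp [vDen_infty]
  | coe q => rw [vDen_coe]; positivity

lemma vertex_ext {x y : OnePoint ℚ} (h1 : vNum x = vNum y) (h2 : vDen x = vDen y) : x = y := by
  induction x using OnePoint.rec with
  | infty =>
    induction y using OnePoint.rec with
    | infty => rfl
    | coe q =>
      rw [vDen_infty, vDen_coe] at h2
      have := q.den_pos; omega
  | coe p =>
    induction y using OnePoint.rec with
    | infty =>
      rw [vDen_infty, vDen_coe] at h2
      have := p.den_pos; omega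
    | coe q =>
      rw [vNum_coe, vNum_coe] at h1
      rw [vDen_coe, vDen_coe] at h2
      have : p = q := by
        apply Rat.ext h1
        exact_mod_cast h2
      rw [this]

/-! ### Basic facts about `F` -/

lemma F_add_two (k : ℕ) : F (k + 2) = F (k + 1) + F k := rfl

lemma F_pos : ∀ k, 0 < F k
  | 0 => one_pos
  | 1 => one_pos
  | k + 2 => by rw [F_add_two]; have := F_pos (k + 1); omega

lemma F_coprime : ∀ k, Nat.Coprime (F (k + 1)) (F k)
  | 0 => by decide
  | k + 1 => by
    rw [F_add_two, Nat.add_comm]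
    exact Nat.coprime_add_self_left.mpr (F_coprime k).symm

lemma cassini : ∀ k, (F (k + 2) : ℤ) * F k - F (k + 1) * F (k + 1) = (-1) ^ k
  | 0 => by norm_num [F]
  | k + 1 => by
    have h := cassini k
    have e2 : (F (k + 2) : ℤ) = F (k + 1) + F k := by exact_mod_cast F_add_two k
    have e3 : (F (k + 3) : ℤ) = F (k + 2) + F (k + 1) := by exact_mod_cast F_add_two (k + 1)
    linear_combination (F (k + 1) : ℤ) * e3 - h - (F (k + 2) : ℤ) * e2

lemma catalan' : ∀ k, (F (k + 3) : ℤ) * F k - F (k + 2) * F (k + 1) = (-1) ^ k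
  | 0 => by norm_num [F]
  | k + 1 => by
    have h := catalan' k
    have e3 : (F (k + 3) : ℤ) = F (k + 2) + F (k + 1) := by exact_mod_cast F_add_two (k + 1)
    have e4 : (F (k + 4) : ℤ) = F (k + 3) + F (k + 2) := by exact_mod_cast F_add_two (k + 2)
    have e2 : (F (k + 2) : ℤ) = F (k + 1) + F k := by exact_mod_cast F_add_two k
    linear_combination (F (k + 1) : ℤ) * e4 - h - (F (k + 3) : ℤ) * e2

/-! ### Numerator and denominator of `fibVertex` -/

lemma vNum_fib (k : ℕ) : vNum (fibVertex k) = (F (k + 1) : ℤ) := by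
  have hb : (0 : ℤ) < (F k : ℤ) := by exact_mod_cast F_pos k
  have hc : Nat.Coprime ((F (k + 1) : ℤ)).natAbs ((F k : ℤ)).natAbs := by
    simpa using F_coprime k
  have h := Rat.num_div_eq_of_coprime hb hc
  show ((F (k + 1) : ℚ) / (F k : ℚ)).num = (F (k + 1) : ℤ)
  push_cast at h
  exact h

lemma vDen_fib (k : ℕ) : vDen (fibVertex k) = (F k : ℤ) := by
  have hb : (0 : ℤ) < (F k : ℤ) := by exact_mod_cast F_pos k
  have hc : Nat.Coprime ((F (k + 1) : ℤ)).natAbs ((F k : ℤ)).natAbs := by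
    simpa using F_coprime k
  have h := Rat.den_div_eq_of_coprime hb hc
  show (((F (k + 1) : ℚ) / (F k : ℚ)).den : ℤ) = (F k : ℤ)
  push_cast at h
  exact h

lemma fib_ne_of_den {k l : ℕ} (h : F k ≠ F l) : fibVertex k ≠ fibVertex l := by
  intro he
  have := congrArg vDen he
  rw [vDen_fib, vDen_fib] at this
  exact h (by exact_mod_cast this)

lemma fib_ne_of_num {k l : ℕ} (h : F (k + 1) ≠ F (l + 1)) : fibVertex k ≠ fibVertex l := by
  intro he
  have := congrArg vNum he
  rw [vNum_fib, vNum_fib] at this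
  exact h (by exact_mod_cast this)

/-! ### Adjacency facts -/

lemma adj_fib_succ (k : ℕ) : fareyGraph.Adj (fibVertex (k + 1)) (fibVertex k) := by
  constructor
  · apply fib_ne_of_num
    rw [F_add_two]
    have := F_pos k; have := F_pos (k + 1)
    omega
  · rw [vNum_fib, vDen_fib, vNum_fib, vDen_fib]
    rw [show ((F (k + 2) : ℤ) * F k - F (k + 1) * F (k + 1)) = (-1) ^ k from cassini k]
    simp

lemma adj_fib_two (k : ℕ) : fareyGraph.Adj (fibVertex (k + 2)) (fibVertex k) := by
  constructor
  · apply fib_ne_of_den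
    rw [F_add_two]
    have := F_pos k; have := F_pos (k + 1)
    omega
  · rw [vNum_fib, vDen_fib, vNum_fib, vDen_fib]
    rw [show ((F (k + 3) : ℤ) * F k - F (k + 2) * F (k + 1)) = (-1) ^ k from catalan' k]
    simp

lemma adj_fib_infty0 : fareyGraph.Adj (fibVertex 0) ∞ := by
  refine ⟨coe_ne_infty _, ?_⟩
  rw [vNum_fib, vDen_fib, vNum_infty, vDen_infty]
  norm_num [show F 0 = 1 from rfl]

lemma adj_fib_infty1 : fareyGraph.Adj (fibVertex 1) ∞ := by
  refine ⟨coe_ne_infty _, ?_⟩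
  rw [vNum_fib, vDen_fib, vNum_infty, vDen_infty]
  norm_num [show F 1 = 1 from rfl]

lemma adj_den_ne {x y : OnePoint ℚ} (h : fareyGraph.Adj x y) (hx : 2 ≤ vDen x) :
    vDen x ≠ vDen y := by
  obtain ⟨-, hdet⟩ := h
  intro he
  rw [← he] at hdet
  have hdvd : vDen x ∣ (1 : ℤ) := by
    rcases (abs_eq (by norm_num : (0:ℤ) ≤ 1)).mp hdet with h' | h'
    · exact ⟨vNum x - vNum y, by linarith [h']⟩
    · exact ⟨vNum y - vNum x, by linarith [h']⟩
  have := Int.le_of_dvd one_pos hdvd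
  omega

/-! ### The key parent lemma -/

lemma par {e f a b c d : ℤ} (hf : 2 ≤ f) (hb0 : 0 ≤ b) (hbf : b < f) (hd0 : 0 ≤ d) (hdf : d < f)
    (h1 : |e * b - f * a| = 1) (h2 : |e * d - f * c| = 1) (hne : ¬(a = c ∧ b = d)) :
    b + d = f ∧ a + c = e ∧ |a * d - b * c| = 1 := by
  have hcop : IsCoprime f e := by
    rcases (abs_eq (by norm_num : (0:ℤ) ≤ 1)).mp h1 with h | h
    · exact ⟨-a, b, by linarith⟩
    · exact ⟨a, -b, by linarith⟩
  have key : ∀ s : ℤ, (s = 1 ∨ s = -1) → e * b - f * a = s → e * d - f * c = -s →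
      b + d = f ∧ a + c = e ∧ |a * d - b * c| = 1 := by
    intro s hs hb hd
    have hdvd : f ∣ e * (b + d) := ⟨a + c, by linarith⟩
    have hdvd2 : f ∣ b + d := hcop.dvd_of_dvd_mul_left hdvd
    obtain ⟨m, hm⟩ := hdvd2
    have hm1 : m = 1 := by
      rcases lt_trichotomy m 1 with h | h | h
      · have hm0 : m ≤ 0 := by omega
        have : f * m ≤ 0 := mul_nonpos_of_nonneg_of_nonpos (by omega) hm0
        have hb0' : b = 0 := by omega
        have hd0' : d = 0 := by omega
        rw [hb0'] at hb
        have : f ∣ (1:ℤ) := ⟨-a * s, by rcases hs with rfl | rfl <;> linarith⟩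
        have := Int.le_of_dvd one_pos this
        omega
      · exact h
      · exfalso
        have : 2 * f ≤ f * m := by nlinarith
        omega
    rw [hm1, mul_one] at hm
    have hm' : b + d = f := hm
    refine ⟨hm', ?_, ?_⟩
    · have hfe : f * e = f * (a + c) := by linear_combination (-e) * hm' + hb + hd
      have := mul_left_cancel₀ (by omega : f ≠ 0) hfe
      omega
    · have he0 : e ≠ 0 := by
        intro h0
        rw [h0] at hb
        have : f ∣ (1:ℤ) := ⟨-a * s, by rcases hs with rfl | rfl <;> linarith⟩
        have := Int.le_of_dvd one_pos this
        omega
      have hfe : f * e = f * (a + c) := by linear_combination (-e) * hm' + hb + hd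
      have hee : e = a + c := by
        have := mul_left_cancel₀ (by omega : f ≠ 0) hfe; omega
      have : e * (a * d - b * c) = e * (-s) := by
        have hb' : e * b = f * a + s := by linarith
        have hd' : e * d = f * c - s := by linarith
        calc e * (a * d - b * c) = a * (e * d) - c * (e * b) := by ring
          _ = a * (f * c - s) - c * (f * a + s) := by rw [hb', hd']
          _ = -s * (a + c) := by ring
          _ = e * (-s) := by rw [hee]; ring
      have := mul_left_cancel₀ he0 this
      rw [this]
      rcases hs with rfl | rfl <;> norm_num
  rcases (abs_eq (by norm_num : (0:ℤ) ≤ 1)).mp h1 with hb | hb <;>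
    rcases (abs_eq (by norm_num : (0:ℤ) ≤ 1)).mp h2 with hd | hd
  · exfalso
    have hdvd : f ∣ e * (b - d) := ⟨a - c, by linarith⟩
    have hdvd2 : f ∣ b - d := hcop.dvd_of_dvd_mul_left hdvd
    obtain ⟨m, hm⟩ := hdvd2
    have hm0 : m = 0 := by
      rcases lt_trichotomy m 0 with h | h | h
      · have : f * m ≤ f * (-1) := mul_le_mul_of_nonneg_left (by omega) (by omega)
        omega
      · exact h
      · have : f * 1 ≤ f * m := mul_le_mul_of_nonneg_left (by omega) (by omega)
        omega
    rw [hm0, mul_zero] at hm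
    have hbd : b = d := by omega
    rw [hbd] at hb
    have : f * a = f * c := by linarith
    have := mul_left_cancel₀ (by omega : f ≠ 0) this
    exact hne ⟨this, hbd⟩
  · exact key 1 (Or.inl rfl) hb (by linarith)
  · exact key (-1) (Or.inr rfl) hb (by linarith)
  · exfalso
    have hdvd : f ∣ e * (b - d) := ⟨a - c, by linarith⟩
    have hdvd2 : f ∣ b - d := hcop.dvd_of_dvd_mul_left hdvd
    obtain ⟨m, hm⟩ := hdvd2
    have hm0 : m = 0 := by
      rcases lt_trichotomy m 0 with h | h | h
      · have : f * m ≤ f * (-1) := mul_le_mul_of_nonneg_left (by omega) (by omega)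
        omega
      · exact h
      · have : f * 1 ≤ f * m := mul_le_mul_of_nonneg_left (by omega) (by omega)
        omega
    rw [hm0, mul_zero] at hm
    have hbd : b = d := by omega
    rw [hbd] at hb
    have : f * a = f * c := by linarith
    have := mul_left_cancel₀ (by omega : f ≠ 0) this
    exact hne ⟨this, hbd⟩

lemma adj_par {y x z : OnePoint ℚ} (hyx : fareyGraph.Adj y x) (hyz : fareyGraph.Adj y z)
    (hfy : 2 ≤ vDen y) (hx : vDen x < vDen y) (hz : vDen z < vDen y) (hxz : x ≠ z) :
    vDen x + vDen z = vDen y ∧ vNum x + vNum z = vNum y ∧ fareyGraph.Adj x z := by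
  obtain ⟨-, h1⟩ := hyx
  obtain ⟨-, h2⟩ := hyz
  have h := par hfy (vDen_nonneg x) hx (vDen_nonneg z) hz h1 h2
    (fun hp => hxz (vertex_ext hp.1 hp.2))
  exact ⟨h.1, h.2.1, hxz, h.2.2⟩

/-! ### Descent to a parent -/

lemma descent : ∀ n : ℕ, ∀ x : OnePoint ℚ, 2 ≤ vDen x → ∀ p : fareyGraph.Walk x ∞,
    p.length = n →
    ∃ (z : OnePoint ℚ) (q : fareyGraph.Walk z ∞),
      fareyGraph.Adj x z ∧ vDen z < vDen x ∧ q.length < n := by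
  intro n
  induction n using Nat.strong_induction_on with
  | _ n ih =>
  intro x hx p hp
  cases p with
  | nil => rw [vDen_infty] at hx; omega
  | @cons _ y _ hadj p' =>
    rw [SimpleGraph.Walk.length_cons] at hp
    rcases lt_trichotomy (vDen y) (vDen x) with hlt | heq | hgt
    · exact ⟨y, p', hadj, hlt, by omega⟩
    · exact absurd heq.symm (adj_den_ne hadj hx)
    · have hy2 : 2 ≤ vDen y := by omega
      obtain ⟨z', q', hadj', hlt', hlen'⟩ :=
        ih p'.length (by omega) y hy2 p' rfl
      by_cases hzx : z' = x
      · subst hzx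
        obtain ⟨z, q, ha, hd, hl⟩ := ih q'.length (by omega) z' hx q' rfl
        exact ⟨z, q, ha, hd, by omega⟩
      · obtain ⟨hsum, -, hadj''⟩ :=
          adj_par hadj.symm hadj' hy2 hgt hlt' (fun h => hzx h.symm)
        rcases lt_trichotomy (vDen z') (vDen x) with h1 | h1 | h1
        · exact ⟨z', q', hadj'', h1, by omega⟩
        · exact absurd h1.symm (adj_den_ne hadj'' hx)
        · obtain ⟨z, q, ha, hd, hl⟩ :=
            ih (q'.length + 1) (by omega) x hx (SimpleGraph.Walk.cons hadj'' q')
              (by rw [SimpleGraph.Walk.length_cons])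
          exact ⟨z, q, ha, hd, by omega⟩

/-! ### The two parents of a Fibonacci vertex -/

lemma nbr {m : ℕ} {z : OnePoint ℚ} (h : fareyGraph.Adj (fibVertex (m + 2)) z)
    (hd : vDen z < (F (m + 2) : ℤ)) :
    z = fibVertex (m + 1) ∨ z = fibVertex m := by
  by_cases h1 : z = fibVertex (m + 1)
  · exact Or.inl h1
  · right
    have hden2 : (2 : ℤ) ≤ vDen (fibVertex (m + 2)) := by
      rw [vDen_fib]
      have h2 : 2 ≤ F (m + 2) := by
        rw [F_add_two]; have := F_pos m; have := F_pos (m + 1); omega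
      exact_mod_cast h2
    have hdenlt : vDen (fibVertex (m + 1)) < vDen (fibVertex (m + 2)) := by
      rw [vDen_fib, vDen_fib]
      have : F (m + 1) < F (m + 2) := by
        rw [F_add_two]; have := F_pos m; omega
      exact_mod_cast this
    have hd' : vDen z < vDen (fibVertex (m + 2)) := by rw [vDen_fib]; exact hd
    obtain ⟨hsum, hnum, -⟩ :=
      adj_par (adj_fib_succ (m + 1)) h hden2 hdenlt hd' (fun hh => h1 hh.symm)
    rw [vDen_fib, vDen_fib] at hsum
    rw [vNum_fib, vNum_fib] at hnum
    have hsum' : (F (m + 1) : ℤ) + vDen z = F (m + 2) := hsum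
    have hnum' : (F (m + 2) : ℤ) + vNum z = F (m + 3) := hnum
    clear hsum hnum
    have e2 : (F (m + 2) : ℤ) = F (m + 1) + F m := by exact_mod_cast F_add_two m
    have e3 : (F (m + 3) : ℤ) = F (m + 2) + F (m + 1) := by exact_mod_cast F_add_two (m + 1)
    apply vertex_ext
    · rw [vNum_fib]; omega
    · rw [vDen_fib]; omega

/-! ### Lower bound -/

lemma main_lb : ∀ n k : ℕ, ∀ p : fareyGraph.Walk (fibVertex k) ∞,
    p.length = n → k / 2 + 1 ≤ n := by
  intro n
  induction n using Nat.strong_induction_on with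
  | _ n ih =>
  intro k p hp
  have hn1 : 1 ≤ n := by
    rcases Nat.eq_zero_or_pos n with h0 | h
    · exfalso
      rw [h0] at hp
      exact coe_ne_infty _ (SimpleGraph.Walk.eq_of_length_eq_zero hp)
    · exact h
  rcases Nat.lt_or_ge k 2 with hk | hk
  · omega
  · obtain ⟨m, rfl⟩ : ∃ m, k = m + 2 := ⟨k - 2, by omega⟩
    have hx : 2 ≤ vDen (fibVertex (m + 2)) := by
      rw [vDen_fib]
      have h2 : 2 ≤ F (m + 2) := by
        rw [F_add_two]; have := F_pos m; have := F_pos (m + 1); omega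
      exact_mod_cast h2
    obtain ⟨z, q, hadj, hlt, hlen⟩ := descent n (fibVertex (m + 2)) hx p hp
    rw [vDen_fib] at hlt
    rcases nbr hadj hlt with rfl | rfl
    · have := ih q.length hlen (m + 1) q rfl; omega
    · have := ih q.length hlen m q rfl; omega

/-! ### Upper bound -/

lemma walk_ub : ∀ k : ℕ, ∃ p : fareyGraph.Walk (fibVertex k) ∞, p.length = k / 2 + 1 := by
  intro k
  induction k using Nat.strong_induction_on with
  | _ k ih =>
  match k with
  | 0 => exact ⟨SimpleGraph.Walk.cons adj_fib_infty0 SimpleGraph.Walk.nil, by simp⟩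
  | 1 => exact ⟨SimpleGraph.Walk.cons adj_fib_infty1 SimpleGraph.Walk.nil, by simp⟩
  | (m + 2) =>
    obtain ⟨p, hp⟩ := ih m (by omega)
    refine ⟨SimpleGraph.Walk.cons (adj_fib_two m) p, ?_⟩
    rw [SimpleGraph.Walk.length_cons, hp]
    omega

lemma dist_fib (k : ℕ) : fareyGraph.dist (fibVertex k) ∞ = k / 2 + 1 := by
  obtain ⟨p, hp⟩ := walk_ub k
  have hub := SimpleGraph.dist_le p
  have hreach : fareyGraph.Reachable (fibVertex k) ∞ := ⟨p⟩
  obtain ⟨q, hq⟩ := hreach.exists_walk_length_eq_dist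
  have hlb := main_lb q.length k q rfl
  omega

/-- For `k ≥ 2`, the Farey distance from `F(k+1)/F(k)` to `∞`
exceeds that from `F(k−1)/F(k−2)` to `∞` by exactly one. -/
theorem farey_dist_fibVertex_succ (k : ℕ) (hk : 2 ≤ k) :
    fareyGraph.dist (fibVertex k) ∞ = fareyGraph.dist (fibVertex (k - 2)) ∞ + 1 := by
  rw [dist_fib, dist_fib]
  omega
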